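/- Fix 0 < β ≤ 1 and an odd prime p. Let a_π : ℕ → ℂ with a_π(1) = 1, and suppose that for sequences (c_a), with c_a := p^{-a} Σ*_{χ mod p^a} conj(χ)(s) χ(r) L_a(χ) for suitable values L_a(χ), one has lim_{a→∞} c_a = (1/p)(1 − 1/p)·a_π(s/r)/(s/r)^β for all pairs of positive integers s, r coprime to p (with the convention a_π(s/r) = 0 when r ∤ s). If two such coefficient functions a_π, a_π' and values L_a, L'_a satisfy L_a(χ) = B^a·C·L'_a(χ) for all primitive p-power order χ of conductor p^a and all but finitely many a, with B, C ∈ ℂ nonzero, then B = C = 1 and a_π(n) = a_π'(n) for all n coprime to p. -/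

import Mathlib

/-!
At `s = r = 1` both twisted averages tend to the same nonzero limit `(1/p)(1 - 1/p)`, because
`a_π(1) = a_π'(1) = 1`. Their ratio is eventually `B ^ a * C`, which therefore tends to `1`;
comparing it with its shift `B ^ (a + 1) * C` forces `B = 1`, and then `C = 1`. Now the two
averages agree for large `a`, so their limits at `s = n`, `r = 1` coincide, which gives
`a_π(n) = a_π'(n)`.
-/

open Filter Topology

theorem eq_one_of_tendsto_pow_mul {M : Type*} [Monoid M] [TopologicalSpace M] [ContinuousMul M]
    [T2Space M] {B C : M} (h : Tendsto (fun a : ℕ => B ^ a * C) atTop (𝓝 1)) :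
    B = 1 ∧ C = 1 := by
  have hshift : Tendsto (fun a : ℕ => B * (B ^ a * C)) atTop (𝓝 1) :=
    (h.comp (tendsto_add_atTop_nat 1)).congr fun a => by
      simp only [Function.comp_apply, pow_succ', mul_assoc]
  have hB : B = 1 := by simpa using tendsto_nhds_unique (h.const_mul B) hshift
  subst hB
  exact ⟨rfl, by simpa using h⟩

theorem eq_one_of_tendsto_of_eventuallyEq_pow_mul {G₀ : Type*} [GroupWithZero G₀]
    [TopologicalSpace G₀] [ContinuousMul G₀] [ContinuousInv₀ G₀] [T2Space G₀]
    {u v : ℕ → G₀} {l B C : G₀} (hu : Tendsto u atTop (𝓝 l)) (hv : Tendsto v atTop (𝓝 l))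
    (hl : l ≠ 0) (huv : ∀ᶠ a in atTop, u a = B ^ a * C * v a) :
    B = 1 ∧ C = 1 := by
  refine eq_one_of_tendsto_pow_mul ?_
  have hquot : Tendsto (u / v) atTop (𝓝 1) := by simpa [hl] using hu.div hv hl
  refine hquot.congr' ?_
  filter_upwards [huv, hv.eventually_ne hl] with a hua hva
  rw [Pi.div_apply, hua, mul_div_cancel_right₀ _ hva]

def primitivePPowerChars (p a : ℕ) : Set (DirichletCharacter ℂ (p ^ a)) :=
  {χ | (∃ k : ℕ, χ ^ (p ^ k) = 1) ∧ χ.IsPrimitive}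

noncomputable def twistedAverage (p : ℕ) (L : (a : ℕ) → DirichletCharacter ℂ (p ^ a) → ℂ)
    (s r a : ℕ) : ℂ :=
  (p : ℂ) ^ (-(a : ℤ)) *
    ∑ᶠ χ ∈ primitivePPowerChars p a,
      (starRingEnd ℂ) (χ (s : ZMod (p ^ a))) * χ (r : ZMod (p ^ a)) * L a χ

theorem twistedAverage_eq_mul {p a : ℕ} {L L' : (a : ℕ) → DirichletCharacter ℂ (p ^ a) → ℂ}
    {c : ℂ} (h : ∀ χ ∈ primitivePPowerChars p a, L a χ = c * L' a χ) (s r : ℕ) :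
    twistedAverage p L s r a = c * twistedAverage p L' s r a := by
  unfold twistedAverage
  rw [mul_left_comm c, mul_finsum_mem _ c]
  congr 1
  exact finsum_mem_congr rfl fun χ hχ => by rw [h χ hχ]; ring

theorem one_div_mul_one_sub_one_div_ne_zero {p : ℕ} (hp : 1 < p) :
    (1 / (p : ℂ)) * (1 - 1 / (p : ℂ)) ≠ 0 := by
  have hp0 : (p : ℂ) ≠ 0 := Nat.cast_ne_zero.2 (by omega)
  refine mul_ne_zero (one_div_ne_zero hp0) (sub_ne_zero.2 fun h => ?_)
  rw [eq_div_iff hp0, one_mul] at h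
  exact absurd h (by exact_mod_cast hp.ne')

theorem stmt_17_general (p : ℕ) [Fact p.Prime]
    (β : ℝ)
    (aπ aπ' : ℕ → ℂ) (h1 : aπ 1 = 1) (h1' : aπ' 1 = 1)
    (F : (ℕ → ℂ) → ℕ → ℕ → ℂ)
    (hF : ∀ f s r, F f s r = if r ∣ s then f (s / r) else 0)
    (L L' : (a : ℕ) → DirichletCharacter ℂ (p ^ a) → ℂ)
    (hlim : ∀ s r : ℕ, 0 < s → 0 < r → ¬ p ∣ s → ¬ p ∣ r →
      Filter.Tendsto (fun a : ℕ =>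
        (p : ℂ) ^ (-(a : ℤ)) *
          ∑ᶠ χ ∈ {χ : DirichletCharacter ℂ (p ^ a) |
              (∃ k : ℕ, χ ^ (p ^ k) = 1) ∧ χ.IsPrimitive},
            (starRingEnd ℂ) (χ (s : ZMod (p ^ a))) * χ (r : ZMod (p ^ a)) * L a χ)
        Filter.atTop
        (nhds ((1 / (p : ℂ)) * (1 - 1 / (p : ℂ)) * F aπ s r / ((((s : ℝ) / r) ^ β : ℝ) : ℂ))))
    (hlim' : ∀ s r : ℕ, 0 < s → 0 < r → ¬ p ∣ s → ¬ p ∣ r →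
      Filter.Tendsto (fun a : ℕ =>
        (p : ℂ) ^ (-(a : ℤ)) *
          ∑ᶠ χ ∈ {χ : DirichletCharacter ℂ (p ^ a) |
              (∃ k : ℕ, χ ^ (p ^ k) = 1) ∧ χ.IsPrimitive},
            (starRingEnd ℂ) (χ (s : ZMod (p ^ a))) * χ (r : ZMod (p ^ a)) * L' a χ)
        Filter.atTop
        (nhds ((1 / (p : ℂ)) * (1 - 1 / (p : ℂ)) * F aπ' s r / ((((s : ℝ) / r) ^ β : ℝ) : ℂ))))
    (B C : ℂ)
    (hrel : ∃ N : ℕ, ∀ a : ℕ, N ≤ a → ∀ χ : DirichletCharacter ℂ (p ^ a),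
      (∃ k : ℕ, χ ^ (p ^ k) = 1) → χ.IsPrimitive → L a χ = B ^ a * C * L' a χ) :
    B = 1 ∧ C = 1 ∧ ∀ n : ℕ, 0 < n → ¬ p ∣ n → aπ n = aπ' n := by
  obtain ⟨N, hN⟩ := hrel
  have hp : 1 < p := (Fact.out : p.Prime).one_lt
  have hp1 : ¬ p ∣ 1 := Nat.not_dvd_of_pos_of_lt one_pos hp
  have hT := one_div_mul_one_sub_one_div_ne_zero hp
  have hscale : ∀ s r, ∀ᶠ a in atTop,
      twistedAverage p L s r a = B ^ a * C * twistedAverage p L' s r a := fun s r =>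
    eventually_atTop.2 ⟨N, fun a ha => twistedAverage_eq_mul (fun χ hχ => hN a ha χ hχ.1 hχ.2) s r⟩
  have hval1 : ∀ f : ℕ → ℂ, f 1 = 1 → (1 / (p : ℂ)) * (1 - 1 / (p : ℂ)) * F f 1 1 /
      (((((1 : ℕ) : ℝ) / ((1 : ℕ) : ℝ)) ^ β : ℝ) : ℂ) = (1 / (p : ℂ)) * (1 - 1 / (p : ℂ)) := by
    intro f hf
    simp [hF, hf]
  have hlim1 : Tendsto (twistedAverage p L 1 1) atTop _ := hlim 1 1 one_pos one_pos hp1 hp1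
  have hlim1' : Tendsto (twistedAverage p L' 1 1) atTop _ := hlim' 1 1 one_pos one_pos hp1 hp1
  rw [hval1 aπ h1] at hlim1
  rw [hval1 aπ' h1'] at hlim1'
  obtain ⟨rfl, rfl⟩ := eq_one_of_tendsto_of_eventuallyEq_pow_mul hlim1 hlim1' hT (hscale 1 1)
  refine ⟨rfl, rfl, fun n hn hpn => ?_⟩
  have hlimn : Tendsto (twistedAverage p L' n 1) atTop _ :=
    (hlim n 1 hn one_pos hpn hp1).congr' <| (hscale n 1).mono fun a ha =>
      ha.trans (by rw [one_pow, one_mul, one_mul])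
  have hval := tendsto_nhds_unique hlimn (hlim' n 1 hn one_pos hpn hp1)
  have hden : ((((n : ℝ) / ((1 : ℕ) : ℝ)) ^ β : ℝ) : ℂ) ≠ 0 :=
    Complex.ofReal_ne_zero.2 (Real.rpow_pos_of_pos (by simpa using hn) β).ne'
  rw [hF, hF] at hval
  simp only [one_dvd, if_true, Nat.div_one] at hval
  exact mul_right_injective₀ hT ((div_left_inj' hden).1 hval)

theorem stmt_17 (p : ℕ) [Fact p.Prime] (hodd : Odd p)
    (β : ℝ) (hβ1 : 0 < β) (hβ2 : β ≤ 1)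
    (aπ aπ' : ℕ → ℂ) (h1 : aπ 1 = 1) (h1' : aπ' 1 = 1)
    (F : (ℕ → ℂ) → ℕ → ℕ → ℂ)
    (hF : ∀ f s r, F f s r = if r ∣ s then f (s / r) else 0)
    (L L' : (a : ℕ) → DirichletCharacter ℂ (p ^ a) → ℂ)
    (hlim : ∀ s r : ℕ, 0 < s → 0 < r → ¬ p ∣ s → ¬ p ∣ r →
      Filter.Tendsto (fun a : ℕ =>
        (p : ℂ) ^ (-(a : ℤ)) *
          ∑ᶠ χ ∈ {χ : DirichletCharacter ℂ (p ^ a) |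
              (∃ k : ℕ, χ ^ (p ^ k) = 1) ∧ χ.IsPrimitive},
            (starRingEnd ℂ) (χ (s : ZMod (p ^ a))) * χ (r : ZMod (p ^ a)) * L a χ)
        Filter.atTop
        (nhds ((1 / (p : ℂ)) * (1 - 1 / (p : ℂ)) * F aπ s r / ((((s : ℝ) / r) ^ β : ℝ) : ℂ))))
    (hlim' : ∀ s r : ℕ, 0 < s → 0 < r → ¬ p ∣ s → ¬ p ∣ r →
      Filter.Tendsto (fun a : ℕ =>
        (p : ℂ) ^ (-(a : ℤ)) *
          ∑ᶠ χ ∈ {χ : DirichletCharacter ℂ (p ^ a) |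
              (∃ k : ℕ, χ ^ (p ^ k) = 1) ∧ χ.IsPrimitive},
            (starRingEnd ℂ) (χ (s : ZMod (p ^ a))) * χ (r : ZMod (p ^ a)) * L' a χ)
        Filter.atTop
        (nhds ((1 / (p : ℂ)) * (1 - 1 / (p : ℂ)) * F aπ' s r / ((((s : ℝ) / r) ^ β : ℝ) : ℂ))))
    (B C : ℂ) (hB : B ≠ 0) (hC : C ≠ 0)
    (hrel : ∃ N : ℕ, ∀ a : ℕ, N ≤ a → ∀ χ : DirichletCharacter ℂ (p ^ a),
      (∃ k : ℕ, χ ^ (p ^ k) = 1) → χ.IsPrimitive → L a χ = B ^ a * C * L' a χ) :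
    B = 1 ∧ C = 1 ∧ ∀ n : ℕ, 0 < n → ¬ p ∣ n → aπ n = aπ' n :=
  stmt_17_general p β aπ aπ' h1 h1' F hF L L' hlim hlim' B C hrel
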